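/- For the fractal reasoning sequence with parameter l̃ ≥ 2 (chain a_m = (m, m+1) arranged in the recursive block order s_k, with reasoning start equal to 1 = (a_1).1 at the final position P = 2(3^(l̃−1)−1)+1), the information quantity at the reasoning start position equals exactly the upper bound: C^l_P = |V^l_P| = 3^(l−1) for every 1 ≤ l ≤ l̃. -/
import Mathlib


/-- Recursive block lists of pair indices: `sBlock (k-1) i` is the list `s_k(i)` of
the paper, with `s_1(i) = (i)` and
`s_{k+1}(i) = s_k(i) ++ s_k(i + 2·3^(k-1)) ++ s_k(i + 3^(k-1))`
(in particular `s_2(i) = (i, i+2, i+1)`). -/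
def sBlock : ℕ → ℤ → List ℤ
  | 0, i => [i]
  | k + 1, i => sBlock k i ++ sBlock k (i + 2 * 3 ^ k) ++ sBlock k (i + 3 ^ k)

/-- The fractal arrangement of the `3^(l̃-1) - 1` pair indices: left blocks
`s_k((3 - 3^k)/2)` for `k = l̃-1` down to `2`, then `s_1(0)`, `s_1(1)`, then right
blocks `s_k((3^(k-1)+1)/2)` for `k = 2` up to `l̃-1`. -/
def fractalPairs (lt : ℕ) : List ℤ :=
  (((List.range (lt - 2)).reverse).map
      (fun k => sBlock (k + 1) (((3 : ℤ) - 3 ^ (k + 2)) / 2))).flatten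
    ++ [(0 : ℤ), 1]
    ++ ((List.range (lt - 2)).map
      (fun k => sBlock (k + 1) (((3 : ℤ) ^ (k + 1) + 1) / 2))).flatten

/-- The fractal reasoning sequence with parameter `l̃`: the chain is
`a_m = (m, m+1)`, the pairs are arranged by `fractalPairs`, so the `m`-th pair of
the sequence occupies positions `2m-1, 2m`, and the reasoning-start token
`x(P) = 1 = (a_1).1` sits at the final position `P = 2(3^(l̃-1) - 1) + 1`. -/
def fractalX (lt : ℕ) (i : ℤ) : ℤ :=
  if i = 2 * ((3 : ℤ) ^ (lt - 1) - 1) + 1 then 1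
  else
    let p := (fractalPairs lt).getD ((i + 1) / 2 - 1).toNat 0
    if Even i then p + 1 else p

/-- Value sets of maximal masked information propagation (positions `≥ 1`). -/
def valueSetM (x : ℤ → ℤ) : ℕ → ℤ → Set ℤ
  | 0, i => {x i}
  | 1, i => if Even i then {x (i - 1), x i} else {x i}
  | l + 2, i =>
      valueSetM x (l + 1) i ∪
        ⋃ (j : ℤ)
          (_ : 1 ≤ j ∧ j < i ∧ (valueSetM x (l + 1) j ∩ valueSetM x (l + 1) i).Nonempty),
          valueSetM x (l + 1) j

/-! ### Auxiliary definitions and lemmas -/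

def aInt : ℕ → ℤ
  | 0 => 1
  | k + 1 => aInt k - 3 ^ k

def bInt : ℕ → ℤ
  | 0 => 1
  | k + 1 => bInt k + 3 ^ k

lemma two_mul_aInt (k : ℕ) : 2 * aInt k = 3 - 3 ^ k := by
  induction k with
  | zero => simp [aInt]
  | succ k ih => rw [aInt]; rw [pow_succ]; ring_nf; ring_nf at ih; linarith

lemma two_mul_bInt (k : ℕ) : 2 * bInt k = 3 ^ k + 1 := by
  induction k with
  | zero => simp [bInt]
  | succ k ih => rw [bInt]; rw [pow_succ]; ring_nf; ring_nf at ih; linarith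

lemma aInt_div (k : ℕ) : ((3 : ℤ) - 3 ^ k) / 2 = aInt k := by
  rw [← two_mul_aInt]; omega

lemma bInt_div (k : ℕ) : ((3 : ℤ) ^ k + 1) / 2 = bInt k := by
  rw [← two_mul_bInt]; omega

lemma sBlock_length (k : ℕ) (i : ℤ) : (sBlock k i).length = 3 ^ k := by
  induction k generalizing i with
  | zero => simp [sBlock]
  | succ k ih => simp [sBlock, ih]; ring

lemma fractalPairs_two : fractalPairs 2 = [0, 1] := by rfl

lemma fractalPairs_peel (m : ℕ) :
    fractalPairs (m + 3) = sBlock (m + 1) (aInt (m + 2)) ++ fractalPairs (m + 2)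
      ++ sBlock (m + 1) (bInt (m + 1)) := by
  have h1 : m + 3 - 2 = m + 1 := rfl
  have h2 : m + 2 - 2 = m := rfl
  rw [fractalPairs, fractalPairs, h1, h2, List.range_succ]
  simp [List.map_append, List.flatten_append, aInt_div, bInt_div, List.append_assoc]

lemma fractalPairs_length (m : ℕ) : (fractalPairs (m + 2)).length + 1 = 3 ^ (m + 1) := by
  induction m with
  | zero => rw [fractalPairs_two]; rfl
  | succ m ih =>
      rw [fractalPairs_peel]
      simp only [List.length_append, sBlock_length]
      rw [pow_succ]
      omega

lemma exists_decomp_left (m l : ℕ) (h : l ≤ m) :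
    ∃ L1 M1 : List ℤ, fractalPairs (m + 2) = L1 ++ sBlock l (aInt (l + 1)) ++ M1 := by
  induction m with
  | zero =>
      interval_cases l
      refine ⟨[], [1], ?_⟩
      rw [fractalPairs_two]
      have : aInt 1 = 0 := by simp [aInt]
      simp [sBlock, this]
  | succ m ih =>
      rcases Nat.lt_or_ge l (m + 1) with hl | hl
      · obtain ⟨L1, M1, hdec⟩ := ih (by omega)
        refine ⟨sBlock (m + 1) (aInt (m + 2)) ++ L1, M1 ++ sBlock (m + 1) (bInt (m + 1)), ?_⟩
        rw [show m + 1 + 2 = m + 3 from rfl, fractalPairs_peel, hdec]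
        simp [List.append_assoc]
      · have : l = m + 1 := by omega
        subst this
        refine ⟨[], fractalPairs (m + 2) ++ sBlock (m + 1) (bInt (m + 1)), ?_⟩
        rw [show m + 1 + 2 = m + 3 from rfl, fractalPairs_peel]
        simp [List.append_assoc]

lemma exists_decomp_right (m l : ℕ) (h : l ≤ m) :
    ∃ L1 M1 : List ℤ, fractalPairs (m + 2) = L1 ++ sBlock l (bInt l) ++ M1 := by
  induction m with
  | zero =>
      interval_cases l
      refine ⟨[0], [], ?_⟩
      rw [fractalPairs_two]
      have : bInt 0 = 1 := by simp [bInt]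
      simp [sBlock, this]
  | succ m ih =>
      rcases Nat.lt_or_ge l (m + 1) with hl | hl
      · obtain ⟨L1, M1, hdec⟩ := ih (by omega)
        refine ⟨sBlock (m + 1) (aInt (m + 2)) ++ L1, M1 ++ sBlock (m + 1) (bInt (m + 1)), ?_⟩
        rw [show m + 1 + 2 = m + 3 from rfl, fractalPairs_peel, hdec]
        simp [List.append_assoc]
      · have : l = m + 1 := by omega
        subst this
        refine ⟨sBlock (m + 1) (aInt (m + 2)) ++ fractalPairs (m + 2), [], ?_⟩
        rw [show m + 1 + 2 = m + 3 from rfl, fractalPairs_peel]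
        simp [List.append_assoc]

def Run (x : ℤ → ℤ) (j0 : ℤ) (L : List ℤ) : Prop :=
  ∀ m : ℕ, m < L.length →
    x (j0 + 2 * m + 1) = L.getD m 0 ∧ x (j0 + 2 * m + 2) = L.getD m 0 + 1

lemma Run.append_left {x : ℤ → ℤ} {j0 : ℤ} {L1 L2 : List ℤ}
    (h : Run x j0 (L1 ++ L2)) : Run x j0 L1 := by
  intro m hm
  have := h m (by simp; omega)
  rw [List.getD_eq_getElem?_getD, List.getElem?_append, if_pos hm,
    ← List.getD_eq_getElem?_getD] at this
  exact this

lemma Run.append_right {x : ℤ → ℤ} {j0 : ℤ} {L1 L2 : List ℤ}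
    (h : Run x j0 (L1 ++ L2)) : Run x (j0 + 2 * L1.length) L2 := by
  intro m hm
  have := h (L1.length + m) (by simp; omega)
  rw [List.getD_eq_getElem?_getD, List.getElem?_append_right (by omega),
    ← List.getD_eq_getElem?_getD] at this
  simp only [Nat.add_sub_cancel_left] at this
  convert this using 3 <;> push_cast <;> ring

lemma block_lemma (x : ℤ → ℤ) :
    ∀ (k : ℕ) (i j0 : ℤ), 0 ≤ j0 → Even j0 → Run x j0 (sBlock k i) →
      Set.Icc i (i + 3 ^ k) ⊆ valueSetM x (k + 1) (j0 + 2 * 3 ^ k) := by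
  intro k
  induction k with
  | zero =>
      intro i j0 h0 he hr
      obtain ⟨h1, h2⟩ := hr 0 (by simp [sBlock])
      simp only [sBlock, List.getD_cons_zero, Nat.cast_zero, mul_zero, add_zero] at h1 h2
      have hev : Even (j0 + 2 * 3 ^ 0) := by
        rcases he with ⟨r, rfl⟩; exact ⟨r + 1, by ring⟩
      intro w hw
      simp only [valueSetM]
      rw [if_pos hev]
      have e1 : j0 + 2 * 3 ^ 0 - 1 = j0 + 1 := by ring
      have e2 : j0 + 2 * (3:ℤ) ^ 0 = j0 + 2 := by ring
      rw [e1, e2, h1, h2]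
      simp only [Set.mem_Icc, pow_zero] at hw
      rcases (by omega : w = i ∨ w = i + 1) with rfl | rfl <;> simp
  | succ k ih =>
      intro i j0 h0 he hr
      rw [sBlock] at hr
      have hA : Run x j0 (sBlock k i) := hr.append_left.append_left
      have hB : Run x (j0 + 2 * 3 ^ k) (sBlock k (i + 2 * 3 ^ k)) := by
        have := hr.append_left.append_right
        rwa [sBlock_length, Nat.cast_pow, Nat.cast_ofNat] at this
      have hC : Run x (j0 + 4 * 3 ^ k) (sBlock k (i + 3 ^ k)) := by
        have := hr.append_right
        rw [List.length_append, sBlock_length, sBlock_length] at this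
        convert this using 2
        push_cast; ring
      have hpow : (0:ℤ) < 3 ^ k := by positivity
      have hevB : Even (j0 + 2 * 3 ^ k) := by
        rcases he with ⟨r, rfl⟩; exact ⟨r + 3 ^ k, by ring⟩
      have hevC : Even (j0 + 4 * 3 ^ k) := by
        rcases he with ⟨r, rfl⟩; exact ⟨r + 2 * 3 ^ k, by ring⟩
      have SA := ih i j0 h0 he hA
      have SB := ih (i + 2 * 3 ^ k) (j0 + 2 * 3 ^ k) (by omega) hevB hB
      have SC := ih (i + 3 ^ k) (j0 + 4 * 3 ^ k) (by omega) hevC hC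
      have e1 : j0 + 2 * 3 ^ k + 2 * 3 ^ k = j0 + 4 * 3 ^ k := by ring
      have e2 : j0 + 4 * 3 ^ k + 2 * 3 ^ k = j0 + 6 * 3 ^ k := by ring
      rw [e1] at SB; rw [e2] at SC
      have e3 : j0 + 2 * 3 ^ (k + 1) = j0 + 6 * 3 ^ k := by ring
      rw [e3]
      intro w hw
      simp only [Set.mem_Icc] at hw
      have hw' : i ≤ w ∧ w ≤ i + 3 * 3 ^ k := by
        constructor
        · exact hw.1
        · have := hw.2; rw [pow_succ] at this; linarith
      rw [show k + 1 + 1 = k + 2 from rfl, valueSetM]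
      rcases le_or_gt w (i + 3 ^ k) with hc | hc
      · refine Set.mem_union_right _ ?_
        simp only [Set.mem_iUnion]
        exact ⟨j0 + 2 * 3 ^ k, ⟨by omega, by omega,
          ⟨i + 3 ^ k, SA (by simp only [Set.mem_Icc]; omega),
            SC (by simp only [Set.mem_Icc]; omega)⟩⟩,
          SA (by simp only [Set.mem_Icc]; omega)⟩
      rcases le_or_gt w (i + 2 * 3 ^ k) with hc2 | hc2
      · exact Set.mem_union_left _ (SC (by simp only [Set.mem_Icc]; omega))
      · refine Set.mem_union_right _ ?_
        simp only [Set.mem_iUnion]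
        exact ⟨j0 + 4 * 3 ^ k, ⟨by omega, by omega,
          ⟨i + 2 * 3 ^ k, SB (by simp only [Set.mem_Icc]; omega),
            SC (by simp only [Set.mem_Icc]; omega)⟩⟩,
          SB (by simp only [Set.mem_Icc]; omega)⟩

lemma fractalX_val (m t : ℕ) (ht : t + 1 < 3 ^ (m + 1)) :
    fractalX (m + 2) (2 * t + 1) = (fractalPairs (m + 2)).getD t 0 ∧
    fractalX (m + 2) (2 * t + 2) = (fractalPairs (m + 2)).getD t 0 + 1 := by
  have hcast : ((3:ℤ) ^ (m + 1)) = ((3 ^ (m + 1) : ℕ) : ℤ) := by push_cast; ring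
  have hm21 : m + 2 - 1 = m + 1 := rfl
  constructor
  · rw [fractalX, hm21, hcast, if_neg (by omega)]
    have hodd : ¬ Even (2 * (t:ℤ) + 1) := by simp only [Int.even_iff]; omega
    simp only [if_neg hodd]
    have e : ((2 * (t:ℤ) + 1 + 1) / 2 - 1).toNat = t := by omega
    rw [e]
  · rw [fractalX, hm21, hcast, if_neg (by omega)]
    have hev : Even (2 * (t:ℤ) + 2) := ⟨t + 1, by ring⟩
    simp only [if_pos hev]
    have e : ((2 * (t:ℤ) + 2 + 1) / 2 - 1).toNat = t := by omega
    rw [e]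

lemma fractalX_P (m : ℕ) :
    fractalX (m + 2) (2 * ((3:ℤ) ^ (m + 1) - 1) + 1) = 1 := by
  rw [fractalX,
    if_pos (show 2 * ((3:ℤ) ^ (m + 1) - 1) + 1 = 2 * ((3:ℤ) ^ (m + 2 - 1) - 1) + 1 from rfl)]

lemma fractalX_diff (m : ℕ) (i : ℤ) (he : Even i) :
    fractalX (m + 2) i = fractalX (m + 2) (i - 1) + 1 ∨
      fractalX (m + 2) i = fractalX (m + 2) (i - 1) := by
  have hcast : ((3:ℤ) ^ (m + 1)) = ((3 ^ (m + 1) : ℕ) : ℤ) := by push_cast; ring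
  have hm21 : m + 2 - 1 = m + 1 := rfl
  have hlen := fractalPairs_length m
  have hpos : 1 ≤ 3 ^ (m + 1) := Nat.one_le_pow _ _ (by norm_num)
  obtain ⟨t, rfl⟩ := he
  have hne : ¬ (t + t = 2 * ((3:ℤ) ^ (m + 1) - 1) + 1) := by rw [hcast]; omega
  have hev : Even (t + t) := ⟨t, rfl⟩
  have hodd : ¬ Even (t + t - 1) := by
    simp only [Int.even_iff] at hev ⊢; omega
  by_cases hP : t + t - 1 = 2 * ((3:ℤ) ^ (m + 1) - 1) + 1
  · right
    rw [fractalX, hm21, if_neg hne, fractalX, hm21, if_pos hP]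
    simp only [if_pos hev]
    have e : ((t + t + 1) / 2 - 1).toNat = 3 ^ (m + 1) - 1 := by
      rw [hcast] at hP; omega
    rw [e, List.getD_eq_default _ _ (by omega)]
    norm_num
  · left
    rw [fractalX, hm21, if_neg hne, fractalX, hm21, if_neg hP]
    simp only [if_pos hev, if_neg hodd]
    have e : ((t + t + 1) / 2 - 1).toNat = ((t + t - 1 + 1) / 2 - 1).toNat := by omega
    rw [e]

lemma run_of_decomp (m : ℕ) (L1 B M1 : List ℤ)
    (hdec : fractalPairs (m + 2) = L1 ++ B ++ M1) :
    Run (fractalX (m + 2)) (2 * L1.length) B := by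
  intro mm hmm
  have hlen3 := fractalPairs_length m
  have hlen : L1.length + B.length + M1.length + 1 = 3 ^ (m + 1) := by
    rw [hdec] at hlen3; simp only [List.length_append] at hlen3; omega
  have hget : (fractalPairs (m + 2)).getD (L1.length + mm) 0 = B.getD mm 0 := by
    rw [hdec, List.append_assoc, List.getD_eq_getElem?_getD, List.getElem?_append,
      if_neg (by omega), Nat.add_sub_cancel_left, List.getElem?_append, if_pos hmm,
      ← List.getD_eq_getElem?_getD]
  obtain ⟨h1, h2⟩ := fractalX_val m (L1.length + mm) (by omega)
  rw [hget] at h1 h2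
  constructor
  · rw [← h1]; congr 1; push_cast; ring
  · rw [← h2]; congr 1; push_cast; ring

lemma valueSetM_upper (x : ℤ → ℤ)
    (hx : ∀ i : ℤ, Even i → x i = x (i - 1) + 1 ∨ x i = x (i - 1)) :
    ∀ (l : ℕ) (i : ℤ), ∃ a : ℤ, valueSetM x (l + 1) i ⊆
      Set.Icc a (a + 3 ^ l - 1 + if Even i then 1 else 0) := by
  intro l
  induction l with
  | zero =>
      intro i
      by_cases he : Even i
      · refine ⟨x (i - 1), ?_⟩
        simp only [valueSetM, if_pos he]
        intro v hv
        simp only [Set.mem_insert_iff, Set.mem_singleton_iff] at hv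
        simp only [Set.mem_Icc, pow_zero, if_pos he]
        rcases hv with rfl | rfl
        · omega
        · rcases hx i he with h | h <;> omega
      · refine ⟨x i, ?_⟩
        simp only [valueSetM, if_neg he]
        intro v hv
        simp only [Set.mem_singleton_iff] at hv
        simp only [Set.mem_Icc, pow_zero, if_neg he]
        omega
  | succ l ih =>
      intro i
      obtain ⟨ai, hai⟩ := ih i
      refine ⟨ai - 3 ^ l, ?_⟩
      have hpow : (0:ℤ) < 3 ^ l := by positivity
      have hpow1 : (3:ℤ) ^ (l + 1) = 3 * 3 ^ l := by ring
      intro v hv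
      rw [show l + 1 + 1 = l + 2 from rfl, valueSetM] at hv
      rcases hv with hv | hv
      · have h := hai hv
        simp only [Set.mem_Icc] at h ⊢
        rw [hpow1]
        split_ifs at h ⊢ <;> omega
      · simp only [Set.mem_iUnion] at hv
        obtain ⟨j, ⟨hj1, hj2, w, hwj, hwi⟩, hvj⟩ := hv
        obtain ⟨aj, haj⟩ := ih j
        have h1 := haj hvj
        have h2 := haj hwj
        have h3 := hai hwi
        simp only [Set.mem_Icc] at h1 h2 h3 ⊢
        rw [hpow1]
        split_ifs at h1 h2 h3 ⊢ <;> omega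

lemma valueSetM_lower (m : ℕ) : ∀ l' : ℕ, l' + 1 ≤ m + 2 →
    Set.Icc (aInt l') (bInt l') ⊆
      valueSetM (fractalX (m + 2)) (l' + 1) (2 * ((3:ℤ) ^ (m + 1) - 1) + 1) := by
  have hcast : ((3:ℤ) ^ (m + 1)) = ((3 ^ (m + 1) : ℕ) : ℤ) := by push_cast; ring
  intro l'
  induction l' with
  | zero =>
      intro _
      have hodd : ¬ Even (2 * ((3:ℤ) ^ (m + 1) - 1) + 1) := by
        simp only [Int.even_iff]; omega
      intro w hw
      simp only [aInt, bInt, Set.mem_Icc] at hw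
      have hw1 : w = 1 := by omega
      simp only [valueSetM, if_neg hodd, hw1, fractalX_P m, Set.mem_singleton_iff]
  | succ l' ih =>
      intro hle
      have hlow := ih (by omega)
      obtain ⟨L1, M1, hdL⟩ := exists_decomp_left m l' (by omega)
      obtain ⟨L2, M2, hdR⟩ := exists_decomp_right m l' (by omega)
      have runL := run_of_decomp m _ _ _ hdL
      have runR := run_of_decomp m _ _ _ hdR
      have hevL : Even (2 * (L1.length : ℤ)) := ⟨_, two_mul _⟩
      have hevR : Even (2 * (L2.length : ℤ)) := ⟨_, two_mul _⟩
      have SL := block_lemma _ l' (aInt (l' + 1)) _ (by positivity) hevL runL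
      have SR := block_lemma _ l' (bInt l') _ (by positivity) hevR runR
      have hlenL : L1.length + 3 ^ l' + M1.length + 1 = 3 ^ (m + 1) := by
        have := fractalPairs_length m
        rw [hdL] at this
        simp only [List.length_append, sBlock_length] at this
        omega
      have hlenR : L2.length + 3 ^ l' + M2.length + 1 = 3 ^ (m + 1) := by
        have := fractalPairs_length m
        rw [hdR] at this
        simp only [List.length_append, sBlock_length] at this
        omega
      have hpowc : ((3:ℤ) ^ l') = ((3 ^ l' : ℕ) : ℤ) := by push_cast; ring
      have hXpos : (1:ℤ) ≤ 3 ^ l' := one_le_pow₀ (by norm_num)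
      have h2a := two_mul_aInt l'
      have h2b := two_mul_bInt l'
      have h2a1 := two_mul_aInt (l' + 1)
      have h2b1 := two_mul_bInt (l' + 1)
      have hp1 : (3:ℤ) ^ (l' + 1) = 3 * 3 ^ l' := by ring
      have haa : aInt (l' + 1) + 3 ^ l' = aInt l' := by rw [aInt]; ring
      have hbb : bInt l' + 3 ^ l' = bInt (l' + 1) := by rw [bInt]
      rw [show l' + 1 + 1 = l' + 2 from rfl, valueSetM]
      intro w hw
      simp only [Set.mem_Icc] at hw
      rcases le_or_gt w (aInt l') with hc | hc
      · refine Set.mem_union_right _ ?_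
        simp only [Set.mem_iUnion]
        refine ⟨2 * (L1.length : ℤ) + 2 * 3 ^ l',
          ⟨by omega, by rw [hcast]; omega,
            ⟨aInt l', SL (by simp only [Set.mem_Icc]; omega),
              hlow (by simp only [Set.mem_Icc]; omega)⟩⟩,
          SL (by simp only [Set.mem_Icc]; omega)⟩
      rcases le_or_gt w (bInt l') with hc2 | hc2
      · exact Set.mem_union_left _ (hlow (by simp only [Set.mem_Icc]; omega))
      · refine Set.mem_union_right _ ?_
        simp only [Set.mem_iUnion]
        refine ⟨2 * (L2.length : ℤ) + 2 * 3 ^ l',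
          ⟨by omega, by rw [hcast]; omega,
            ⟨bInt l', SR (by simp only [Set.mem_Icc]; omega),
              hlow (by simp only [Set.mem_Icc]; omega)⟩⟩,
          SR (by simp only [Set.mem_Icc]; omega)⟩

/-- for the fractal reasoning sequence with parameter `l̃ ≥ 2`, the
information quantity at the reasoning-start position `P = 2(3^(l̃-1)-1)+1` equals
exactly `3^(l-1)` for every layer `1 ≤ l ≤ l̃`. -/
theorem fractal_start_exact_information
    (lt : ℕ) (hlt : 2 ≤ lt) (l : ℕ) (hl : 1 ≤ l) (hllt : l ≤ lt) :
    (valueSetM (fractalX lt) l (2 * ((3 : ℤ) ^ (lt - 1) - 1) + 1)).ncard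
      = 3 ^ (l - 1) := by
  obtain ⟨m, rfl⟩ : ∃ m, lt = m + 2 := ⟨lt - 2, by omega⟩
  obtain ⟨l', rfl⟩ : ∃ l', l = l' + 1 := ⟨l - 1, by omega⟩
  have hm21 : m + 2 - 1 = m + 1 := rfl
  rw [hm21, show l' + 1 - 1 = l' from rfl]
  have hcast : ((3:ℤ) ^ (m + 1)) = ((3 ^ (m + 1) : ℕ) : ℤ) := by push_cast; ring
  have hlow := valueSetM_lower m l' (by omega)
  obtain ⟨a0, hup⟩ := valueSetM_upper (fractalX (m + 2)) (fractalX_diff m) l'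
    (2 * ((3:ℤ) ^ (m + 1) - 1) + 1)
  have hodd : ¬ Even (2 * ((3:ℤ) ^ (m + 1) - 1) + 1) := by
    simp only [Int.even_iff]; omega
  rw [if_neg hodd] at hup
  have hfin : (Set.Icc a0 (a0 + 3 ^ l' - 1 + 0)).Finite := Set.finite_Icc _ _
  have le1 := Set.ncard_le_ncard hup hfin
  have le2 := Set.ncard_le_ncard hlow (hfin.subset hup)
  have hIcc : ∀ a b : ℤ, (Set.Icc a b).ncard = (b + 1 - a).toNat := by
    intro a b; rw [← Finset.coe_Icc, Set.ncard_coe_finset, Int.card_Icc]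
  rw [hIcc] at le1 le2
  have h2a := two_mul_aInt l'
  have h2b := two_mul_bInt l'
  have hc : ((3:ℤ) ^ l') = ((3 ^ l' : ℕ) : ℤ) := by push_cast; ring
  have e1 : (a0 + 3 ^ l' - 1 + 0 + 1 - a0).toNat = 3 ^ l' := by
    rw [hc]; generalize (3:ℕ) ^ l' = X; omega
  have e2 : (bInt l' + 1 - aInt l').toNat = 3 ^ l' := by
    rw [hc] at h2a h2b; generalize (3:ℕ) ^ l' = X at h2a h2b ⊢; omega
  omega
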